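/- arXiv:2411.00015 — 8 statements merged into one kernel-verified Lean document; each statement's English description precedes it below -/
import Mathlib

section
/- For every integer b ≥ 2, the base-3 tetration satisfies T(b+1) ≡ T(b) (mod 10^(b-1)). -/
/-
By Euler's theorem `3 ^ x ≡ 3 ^ y [MOD n]` as soon as `x ≡ y [MOD φ n]`, so a congruence between
consecutive towers modulo `φ n` lifts one level up to a congruence modulo `n`. Since
`φ (2 ^ (k + 1)) = 2 ^ k`, induction gives `T (b + 1) ≡ T b` modulo `2 ^ (b + 1)`; since
`φ (5 ^ (k + 1)) = 4 * 5 ^ k`, the 2-adic congruence modulo 4 and induction give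
`T (b + 2) ≡ T (b + 1)` modulo `5 ^ b`. The two combine modulo `10 ^ (b - 1)`.
-/

def T : ℕ → ℕ
  | 0 => 1
  | b + 1 => 3 ^ T b

theorem Nat.ModEq.pow_of_modEq_totient {a n x y : ℕ} (ha : a.Coprime n)
    (h : x ≡ y [MOD n.totient]) : a ^ x ≡ a ^ y [MOD n] := by
  rcases le_or_gt n 1 with hn | hn
  · interval_cases n
    · rw [Nat.totient_zero, Nat.modEq_zero_iff] at h
      rw [h]
    · exact Nat.modEq_one
  · unfold Nat.ModEq
    rw [Nat.pow_totient_mod hn ha, h, ← Nat.pow_totient_mod hn ha]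

theorem T_succ_modEq_of_modEq_totient {b n : ℕ} (hn : Nat.Coprime 3 n)
    (h : T (b + 1) ≡ T b [MOD n.totient]) : T (b + 2) ≡ T (b + 1) [MOD n] :=
  Nat.ModEq.pow_of_modEq_totient hn h

theorem T_succ_modEq_two_pow (b : ℕ) : T (b + 1) ≡ T b [MOD 2 ^ (b + 1)] := by
  induction b with
  | zero => decide
  | succ b ih =>
    refine T_succ_modEq_of_modEq_totient (Nat.Coprime.pow_right _ (by norm_num)) ?_
    simpa [Nat.totient_prime_pow_succ Nat.prime_two] using ih

theorem T_succ_modEq_five_pow (b : ℕ) : T (b + 2) ≡ T (b + 1) [MOD 5 ^ b] := by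
  induction b with
  | zero => exact Nat.modEq_one
  | succ b ih =>
    refine T_succ_modEq_of_modEq_totient (Nat.Coprime.pow_right _ (by norm_num)) ?_
    have h4 : T (b + 2) ≡ T (b + 1) [MOD 4] :=
      (T_succ_modEq_two_pow (b + 1)).of_dvd (pow_dvd_pow 2 (show 2 ≤ b + 2 by omega))
    rw [Nat.totient_prime_pow_succ (by norm_num), mul_comm]
    exact (Nat.modEq_and_modEq_iff_modEq_mul (Nat.Coprime.pow_right _ (by norm_num))).mp ⟨h4, ih⟩

theorem stmt3 : ∀ b : ℕ, 2 ≤ b → T (b + 1) ≡ T b [MOD 10 ^ (b - 1)] := by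
  intro b hb
  obtain ⟨c, rfl⟩ := Nat.exists_eq_add_of_le' hb
  have h2 : T (c + 3) ≡ T (c + 2) [MOD 2 ^ (c + 1)] :=
    (T_succ_modEq_two_pow (c + 2)).of_dvd (pow_dvd_pow 2 (by omega))
  have h5 : T (c + 3) ≡ T (c + 2) [MOD 5 ^ (c + 1)] := T_succ_modEq_five_pow (c + 1)
  rw [Nat.add_sub_assoc (by norm_num), show (10 : ℕ) = 2 * 5 by rfl, mul_pow]
  exact (Nat.modEq_and_modEq_iff_modEq_mul (Nat.Coprime.pow _ _ (by norm_num))).mp ⟨h2, h5⟩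
end

section
/- For every integer b ≥ 2, the base-3 tetration satisfies T(b+1) ≢ T(b) (mod 10^b); i.e., exactly b−1 rightmost decimal digits of T(b) agree with those of T(b+1). -/
lemma T_lt_succ (b : ℕ) : T b < T (b + 1) := by
  show T b < 3 ^ T b
  calc T b < 2 ^ T b := Nat.lt_two_pow_self
    _ ≤ 3 ^ T b := Nat.pow_le_pow_left (by norm_num) _

lemma key5 {k : ℕ} (hk : k ≠ 0) (h4 : 4 ∣ k) :
    padicValNat 5 (3 ^ k - 1) = padicValNat 5 k + 1 := by
  haveI : Fact (Nat.Prime 5) := ⟨by norm_num⟩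
  obtain ⟨m, rfl⟩ := h4
  have hm : m ≠ 0 := by rintro rfl; simp at hk
  have h1 : (3:ℕ) ^ (4 * m) = 81 ^ m := by rw [pow_mul]; norm_num
  have h2 : (1:ℕ) = 1 ^ m := (one_pow m).symm
  have : padicValNat 5 (81 ^ m - 1 ^ m) = padicValNat 5 (81 - 1) + padicValNat 5 m := by
    have : Fact (Nat.Prime 5) := ⟨by norm_num⟩
    exact padicValNat.pow_sub_pow ⟨2, by norm_num⟩ (by norm_num) (by norm_num) (by norm_num) hm
  rw [h1, h2, this]
  have h80 : padicValNat 5 (81 - 1) = 1 := by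
    have : (81:ℕ) - 1 = 5 * 16 := by norm_num
    rw [this, padicValNat.mul (by norm_num) (by norm_num),
      padicValNat.self (by norm_num), padicValNat.eq_zero_of_not_dvd (by norm_num)]
  have h4m : padicValNat 5 (4 * m) = padicValNat 5 m := by
    have : Fact (Nat.Prime 5) := ⟨by norm_num⟩
    rw [padicValNat.mul (by norm_num) hm,
      padicValNat.eq_zero_of_not_dvd (by norm_num), zero_add]
  omega

lemma d_struct (b : ℕ) :
    T (b + 2) - T (b + 1) = 3 ^ T b * (3 ^ (T (b + 1) - T b) - 1) := by
  rw [Nat.mul_sub, mul_one, ← pow_add, Nat.add_sub_cancel' (T_lt_succ b).le]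
  rfl

lemma main_ind : ∀ b : ℕ, 1 ≤ b →
    padicValNat 5 (T (b + 1) - T b) = b - 1 ∧ 8 ∣ (T (b + 1) - T b) := by
  intro b hb
  induction b with
  | zero => omega
  | succ b ih =>
    rcases Nat.eq_or_lt_of_le hb with h | h
    · -- b + 1 = 1, i.e. b = 0 : T 2 - T 1 = 27 - 3 = 24
      have hb0 : b = 0 := by omega
      subst hb0
      norm_num [T]
    · have hb1 : 1 ≤ b := by omega
      obtain ⟨hval, hdvd⟩ := ih hb1
      have hpos : T (b + 1) - T b ≠ 0 := by have := T_lt_succ b; omega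
      have h4 : 4 ∣ T (b + 1) - T b := dvd_trans (by norm_num) hdvd
      set k := T (b + 1) - T b with hk
      have hstruct := d_struct b
      have hkey := key5 hpos h4
      have hfact : Fact (Nat.Prime 5) := ⟨by norm_num⟩
      have h3pow : padicValNat 5 (3 ^ T b) = 0 :=
        padicValNat.eq_zero_of_not_dvd (by
          intro h
          exact absurd (Nat.Prime.dvd_of_dvd_pow (by norm_num) h) (by norm_num))
      have h3k1 : 3 ^ k - 1 ≠ 0 := by
        have : (1:ℕ) < 3 ^ k := Nat.one_lt_pow hpos (by norm_num)
        omega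
      constructor
      · rw [hstruct, padicValNat.mul (pow_ne_zero _ (by norm_num)) h3k1, h3pow, zero_add,
          hkey, hval]
        omega
      · rw [hstruct]
        apply Dvd.dvd.mul_left
        -- 8 ∣ 3 ^ k - 1 since k even
        obtain ⟨t, ht⟩ : 2 ∣ k := dvd_trans (by norm_num) h4
        have h9 : (3:ℕ) ^ k = 9 ^ t := by rw [ht, pow_mul]; norm_num
        rw [h9]
        have : (9:ℕ) ^ t ≡ 1 ^ t [MOD 8] := Nat.ModEq.pow t (by decide)
        rw [one_pow] at this
        have h1le : 1 ≤ (9:ℕ) ^ t := Nat.one_le_pow _ _ (by norm_num)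
        exact (Nat.modEq_iff_dvd' h1le).mp this.symm

theorem stmt4 : ∀ b : ℕ, 2 ≤ b → ¬ (T (b + 1) ≡ T b [MOD 10 ^ b]) := by
  intro b hb hmod
  obtain ⟨hval, -⟩ := main_ind b (by omega)
  have hlt := T_lt_succ b
  have hdvd : 10 ^ b ∣ T (b + 1) - T b :=
    (Nat.modEq_iff_dvd' hlt.le).mp hmod.symm
  have h5 : 5 ^ b ∣ T (b + 1) - T b := dvd_trans (pow_dvd_pow_of_dvd (by norm_num) b) hdvd
  have hfact : Fact (Nat.Prime 5) := ⟨by norm_num⟩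
  have := (padicValNat_dvd_iff_le (p := 5) (by omega : T (b+1) - T b ≠ 0)).mp h5
  omega
end

section
/- The base-3 tetration has unit constant congruence speed: for every b ≥ 2, T(b+1) ≡ T(b) (mod 10^(b-1)) and T(b+2) ≡ T(b+1) (mod 10^b), i.e., exactly one new rightmost digit freezes at each step; equivalently the 5-adic valuation of 3^2 + 1 equals 1 and this equals V(3). -/
-- order of 3 mod powers of 2
lemma two_aux : ∀ n : ℕ, ∃ c : ℕ, 3 ^ (2 ^ (n + 1)) = 1 + 2 ^ (n + 3) * c := by
  intro n
  induction n with
  | zero => exact ⟨1, by norm_num⟩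
  | succ k ih =>
    obtain ⟨c, hc⟩ := ih
    refine ⟨c + 2 ^ (k + 2) * c ^ 2, ?_⟩
    have h : (3 : ℕ) ^ (2 ^ (k + 2)) = (3 ^ (2 ^ (k + 1))) ^ 2 := by
      rw [← pow_mul]; ring_nf
    rw [h, hc]; ring

-- order of 3 mod powers of 5
lemma five_aux : ∀ n : ℕ, ∃ c : ℕ, 3 ^ (4 * 5 ^ n) = 1 + 5 ^ (n + 1) * c := by
  intro n
  induction n with
  | zero => exact ⟨16, by norm_num⟩
  | succ k ih =>
    obtain ⟨c, hc⟩ := ih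
    refine ⟨c + 5 ^ k * (10 * c ^ 2 + 10 * 5 ^ (k + 1) * c ^ 3
      + 5 * 5 ^ (2 * k + 2) * c ^ 4 + 5 ^ (3 * k + 3) * c ^ 5), ?_⟩
    have h : (3 : ℕ) ^ (4 * 5 ^ (k + 1)) = (3 ^ (4 * 5 ^ k)) ^ 5 := by
      rw [← pow_mul]; ring_nf
    rw [h, hc]; ring

lemma pow_congr (m e x y : ℕ) (h : ∃ c : ℕ, 3 ^ e = 1 + m * c) (hxy : y ≤ x)
    (hd : e ∣ x - y) : 3 ^ x ≡ 3 ^ y [MOD m] := by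
  obtain ⟨c, hc⟩ := h
  obtain ⟨k, hk⟩ := hd
  have hx : x = y + e * k := by omega
  have he : (3 : ℕ) ^ e ≡ 1 [MOD m] := by
    unfold Nat.ModEq
    rw [hc, Nat.add_mul_mod_self_left]
  calc 3 ^ x = 3 ^ y * (3 ^ e) ^ k := by rw [hx, pow_add, pow_mul]
    _ ≡ 3 ^ y * 1 ^ k [MOD m] := Nat.ModEq.mul_left _ (he.pow k)
    _ = 3 ^ y := by ring

lemma T_le (b : ℕ) : T b ≤ T (b + 1) := by
  show T b ≤ 3 ^ T b
  exact le_of_lt (Nat.lt_pow_self (by norm_num))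

lemma main_ind_s6 : ∀ c : ℕ, T (c + 3) ≡ T (c + 2) [MOD 2 ^ (c + 3) * 5 ^ (c + 1)] := by
  intro c
  induction c with
  | zero =>
    show T 3 % 40 = T 2 % 40
    norm_num [T]
  | succ k ih =>
    have hd : 2 ^ (k + 3) * 5 ^ (k + 1) ∣ T (k + 3) - T (k + 2) :=
      (Nat.modEq_iff_dvd' (T_le (k + 2))).mp ih.symm
    have h2 : (3 : ℕ) ^ T (k + 3) ≡ 3 ^ T (k + 2) [MOD 2 ^ (k + 4)] := by
      refine pow_congr _ (2 ^ (k + 2)) _ _ (two_aux (k + 1)) (T_le (k + 2)) ?_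
      exact dvd_trans ⟨2 * 5 ^ (k + 1), by ring⟩ hd
    have h5 : (3 : ℕ) ^ T (k + 3) ≡ 3 ^ T (k + 2) [MOD 5 ^ (k + 2)] := by
      refine pow_congr _ (4 * 5 ^ (k + 1)) _ _ (five_aux (k + 1)) (T_le (k + 2)) ?_
      exact dvd_trans ⟨2 ^ (k + 1), by ring⟩ hd
    have hcop : Nat.Coprime (2 ^ (k + 4)) (5 ^ (k + 2)) :=
      Nat.Coprime.pow _ _ (by norm_num : Nat.Coprime 2 5)
    have h := (Nat.modEq_and_modEq_iff_modEq_mul hcop).mp ⟨h2, h5⟩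
    exact (show T (k + 1 + 3) = 3 ^ T (k + 3) from rfl) ▸
      (show T (k + 1 + 2) = 3 ^ T (k + 2) from rfl) ▸
      (show 2 ^ (k + 1 + 3) * 5 ^ (k + 1 + 1) = 2 ^ (k + 4) * 5 ^ (k + 2) from rfl) ▸ h

theorem stmt6 :
    (∀ b : ℕ, 2 ≤ b → T (b + 1) ≡ T b [MOD 10 ^ (b - 1)] ∧
      T (b + 2) ≡ T (b + 1) [MOD 10 ^ b]) ∧
    padicValNat 5 (3 ^ 2 + 1) = 1 := by
  constructor
  · intro b hb
    obtain ⟨c, rfl⟩ : ∃ c, b = c + 2 := ⟨b - 2, by omega⟩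
    constructor
    · have := main_ind_s6 c
      have hm : (10 : ℕ) ^ (c + 2 - 1) ∣ 2 ^ (c + 3) * 5 ^ (c + 1) := by
        have : (10 : ℕ) ^ (c + 1) = 2 ^ (c + 1) * 5 ^ (c + 1) := by
          rw [show (10 : ℕ) = 2 * 5 from rfl, mul_pow]
        rw [show c + 2 - 1 = c + 1 from rfl, this]
        exact ⟨4, by ring⟩
      exact this.of_dvd hm
    · have := main_ind_s6 (c + 1)
      have hm : (10 : ℕ) ^ (c + 2) ∣ 2 ^ (c + 4) * 5 ^ (c + 2) := by
        rw [show (10 : ℕ) = 2 * 5 from rfl, mul_pow]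
        exact ⟨4, by ring⟩
      exact Nat.ModEq.of_dvd hm this
  · haveI : Fact (Nat.Prime 5) := ⟨by norm_num⟩
    rw [show (3 ^ 2 + 1 : ℕ) = 5 * 2 from rfl,
      padicValNat.mul (by norm_num) (by norm_num), padicValNat_self,
      padicValNat.eq_zero_of_not_dvd (by norm_num)]
end

section
/- For every even integer b ≥ 2, the difference T(b+1) − T(b) of consecutive base-3 tetrations satisfies (T(b+1) − T(b)) / 10^(b-1) ≡ 6 (mod 10); i.e., the b-th rightmost decimal digit of T(b+1) − T(b) is 6. -/
-- binomial helper: (1+x)^m = 1 + m*x + x^2*c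
lemma binom_sq (x : ℕ) : ∀ m : ℕ, ∃ c : ℕ, (1 + x) ^ m = 1 + m * x + x ^ 2 * c := by
  intro m
  induction m with
  | zero => exact ⟨0, by ring⟩
  | succ m ih =>
    obtain ⟨c, hc⟩ := ih
    exact ⟨m + c + c * x, by rw [pow_succ, hc]; ring⟩

-- binomial helper: (1+a)^n = 1 + a*s
lemma binom_lin (a : ℕ) : ∀ n : ℕ, ∃ s : ℕ, (1 + a) ^ n = 1 + a * s := by
  intro n
  induction n with
  | zero => exact ⟨0, by ring⟩
  | succ n ih =>
    obtain ⟨s, hs⟩ := ih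
    exact ⟨1 + s + a * s, by rw [pow_succ, hs]; ring⟩

-- 5-adic key lemma
lemma key5_s8 : ∀ j : ℕ, ∃ u : ℕ, (81 : ℕ) ^ (5 ^ j) = 1 + 5 ^ (j + 1) * u ∧ u % 5 = 1 := by
  intro j
  induction j with
  | zero => exact ⟨16, by norm_num, by norm_num⟩
  | succ j ih =>
    obtain ⟨u, hu, hu5⟩ := ih
    refine ⟨u + 5 * (2 * 5 ^ j * u ^ 2 + 2 * 5 ^ (2 * j + 1) * u ^ 3 +
        5 ^ (3 * j + 2) * u ^ 4 + 5 ^ (4 * j + 2) * u ^ 5), ?_, ?_⟩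
    · have h1 : (81 : ℕ) ^ (5 ^ (j + 1)) = ((81 : ℕ) ^ (5 ^ j)) ^ 5 := by
        rw [← pow_mul, pow_succ]
      rw [h1, hu]
      ring
    · simp [Nat.add_mul_mod_self_left, hu5]

-- 2-adic key lemma
lemma key2 : ∀ j : ℕ, ∃ v : ℕ, (3 : ℕ) ^ (2 ^ (j + 2)) = 1 + 2 ^ (j + 4) * v := by
  intro j
  induction j with
  | zero => exact ⟨5, by norm_num⟩
  | succ j ih =>
    obtain ⟨v, hv⟩ := ih
    refine ⟨v + 2 ^ (j + 3) * v ^ 2, ?_⟩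
    have h1 : (3 : ℕ) ^ (2 ^ (j + 3)) = ((3 : ℕ) ^ (2 ^ (j + 2))) ^ 2 := by
      rw [← pow_mul, pow_succ]
    rw [h1, hv]
    ring

lemma T_odd : ∀ k : ℕ, T k % 2 = 1 := by
  intro k
  cases k with
  | zero => rfl
  | succ k =>
    show 3 ^ T k % 2 = 1
    rw [Nat.pow_mod]
    simp

lemma T_mod4 : ∀ k : ℕ, T (k + 1) % 4 = 3 := by
  intro k
  obtain ⟨t, ht⟩ : ∃ t, T k = 2 * t + 1 := ⟨T k / 2, by have := T_odd k; omega⟩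
  show 3 ^ T k % 4 = 3
  rw [ht, pow_add, pow_mul, Nat.mul_mod, Nat.pow_mod]
  norm_num

lemma T_mod5 : ∀ k : ℕ, T (k + 2) % 5 = 2 := by
  intro k
  obtain ⟨t, ht⟩ : ∃ t, T (k + 1) = 4 * t + 3 := ⟨T (k + 1) / 4, by have := T_mod4 k; omega⟩
  show 3 ^ T (k + 1) % 5 = 2
  rw [ht, pow_add, pow_mul, Nat.mul_mod, Nat.pow_mod]
  norm_num

-- Main invariant
lemma main_inv : ∀ k : ℕ, ∃ m : ℕ, T (k + 3) = T (k + 2) + 4 * 5 ^ (k + 1) * m ∧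
    2 ^ (k + 1) ∣ m ∧ m % 5 = 3 ^ (k + 1) % 5 := by
  intro k
  induction k with
  | zero =>
    refine ⟨381279874248, ?_, ⟨190639937124, by norm_num⟩, by norm_num⟩
    show (3 : ℕ) ^ T 2 = T 2 + 4 * 5 ^ 1 * 381279874248
    show (3 : ℕ) ^ (3 ^ T 1) = 3 ^ T 1 + 4 * 5 ^ 1 * 381279874248
    norm_num [T]
  | succ k ih =>
    obtain ⟨m, heq, ⟨m₂, hm₂⟩, hmod⟩ := ih
    obtain ⟨u, hu, hu5⟩ := key5_s8 (k + 1)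
    obtain ⟨c, hc⟩ := binom_sq (5 ^ (k + 2) * u) m
    obtain ⟨v, hv⟩ := key2 (k + 1)
    obtain ⟨s, hs⟩ := binom_lin (2 ^ (k + 5) * v) (5 ^ (k + 1) * m₂)
    -- T(k+4) = T(k+3) * 3^(4*5^(k+1)*m)
    have base : T (k + 4) = T (k + 3) * 3 ^ (4 * 5 ^ (k + 1) * m) := by
      show (3 : ℕ) ^ T (k + 3) = T (k + 3) * 3 ^ (4 * 5 ^ (k + 1) * m)
      conv_lhs => rw [heq]
      rw [pow_add]
      rfl
    have e1 : T (k + 4) = T (k + 3) +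
        5 ^ (k + 2) * (T (k + 3) * (m * u + 5 ^ (k + 2) * u ^ 2 * c)) := by
      have h3 : (3 : ℕ) ^ (4 * 5 ^ (k + 1) * m) = ((81 : ℕ) ^ (5 ^ (k + 1))) ^ m := by
        rw [← pow_mul, show (81 : ℕ) = 3 ^ 4 from rfl, ← pow_mul]
        ring_nf
      rw [base, h3, hu, hc]
      ring
    have e2 : T (k + 4) = T (k + 3) + 2 ^ (k + 5) * (T (k + 3) * (v * s)) := by
      have h3 : (3 : ℕ) ^ (4 * 5 ^ (k + 1) * m) =
          ((3 : ℕ) ^ (2 ^ (k + 3))) ^ (5 ^ (k + 1) * m₂) := by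
        rw [← pow_mul, hm₂]
        congr 1
        have : (2 : ℕ) ^ (k + 3) = 4 * 2 ^ (k + 1) := by ring
        rw [this]
        ring
      rw [base, h3, hv, hs]
      ring
    have e3 : 5 ^ (k + 2) * (T (k + 3) * (m * u + 5 ^ (k + 2) * u ^ 2 * c)) =
        2 ^ (k + 5) * (T (k + 3) * (v * s)) :=
      Nat.add_left_cancel (e1.symm.trans e2)
    have hdvd : (2 : ℕ) ^ (k + 5) ∣ T (k + 3) * (m * u + 5 ^ (k + 2) * u ^ 2 * c) := by
      have h25 : Nat.Coprime 2 5 := by decide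
      have hcop : Nat.Coprime (2 ^ (k + 5)) (5 ^ (k + 2)) := h25.pow _ _
      exact hcop.dvd_of_dvd_mul_left ⟨T (k + 3) * (v * s), e3⟩
    obtain ⟨w, hw⟩ := hdvd
    refine ⟨2 ^ (k + 3) * w, ?_, ⟨2 * w, by ring⟩, ?_⟩
    · rw [e1, hw]
      ring
    · -- m' = 2^(k+3)*w, 4*m' = 2^(k+5)*w = N
      have hN : T (k + 3) * (m * u + 5 ^ (k + 2) * u ^ 2 * c) ≡ 2 * 3 ^ (k + 1) [MOD 5] := by
        have h1 : T (k + 3) ≡ 2 [MOD 5] := T_mod5 (k + 1)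
        have h2 : m * u + 5 ^ (k + 2) * u ^ 2 * c ≡ 3 ^ (k + 1) * 1 + 0 [MOD 5] := by
          refine Nat.ModEq.add (Nat.ModEq.mul hmod ?_) ?_
          · exact hu5
          · exact (Nat.modEq_zero_iff_dvd).mpr ⟨5 ^ (k + 1) * u ^ 2 * c, by ring⟩
        simpa using h1.mul h2
      have hNm : (4 : ℕ) * (2 ^ (k + 3) * w) ≡ 2 * 3 ^ (k + 1) [MOD 5] := by
        have : (4 : ℕ) * (2 ^ (k + 3) * w) = 2 ^ (k + 5) * w := by ring
        rw [this, ← hw]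
        exact hN
      have : (2 : ℕ) ^ (k + 3) * w ≡ 3 ^ (k + 2) [MOD 5] := by
        calc (2 : ℕ) ^ (k + 3) * w = 1 * (2 ^ (k + 3) * w) := by ring
          _ ≡ 16 * (2 ^ (k + 3) * w) [MOD 5] := Nat.ModEq.mul_right _ (by decide)
          _ = 4 * (4 * (2 ^ (k + 3) * w)) := by ring
          _ ≡ 4 * (2 * 3 ^ (k + 1)) [MOD 5] := Nat.ModEq.mul_left 4 hNm
          _ = 8 * 3 ^ (k + 1) := by ring
          _ ≡ 3 * 3 ^ (k + 1) [MOD 5] := Nat.ModEq.mul_right _ (by decide)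
          _ = 3 ^ (k + 2) := by ring
      exact this

theorem stmt8 : ∀ b : ℕ, 2 ≤ b → Even b →
    (T (b + 1) - T b) / 10 ^ (b - 1) ≡ 6 [MOD 10] := by
  intro b hb heb
  obtain ⟨a, ha⟩ : ∃ a, b = 2 * a + 2 := by
    obtain ⟨r, hr⟩ := heb
    exact ⟨r - 1, by omega⟩
  subst ha
  obtain ⟨m, heq, ⟨m₂, hm₂⟩, hmod⟩ := main_inv (2 * a)
  have hb1 : 2 * a + 2 + 1 = 2 * a + 3 := by ring
  have hb2 : 2 * a + 2 - 1 = 2 * a + 1 := by omega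
  rw [hb1, hb2]
  have hsub : T (2 * a + 3) - T (2 * a + 2) = 10 ^ (2 * a + 1) * (4 * m₂) := by
    rw [heq, hm₂, Nat.add_sub_cancel_left]
    rw [show (10 : ℕ) = 2 * 5 from rfl, mul_pow]
    ring
  rw [hsub, Nat.mul_div_cancel_left _ (pow_pos (by norm_num) _)]
  have hmod' : (2 : ℕ) ^ (2 * a + 1) * m₂ ≡ 3 ^ (2 * a + 1) [MOD 5] := by
    rw [← hm₂]; exact hmod
  have hm5 : m₂ % 5 = 4 := by
    have : m₂ ≡ 9 [MOD 5] := by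
      calc m₂ = 1 ^ (2 * a + 1) * m₂ := by simp
        _ ≡ 6 ^ (2 * a + 1) * m₂ [MOD 5] :=
            Nat.ModEq.mul_right _ (Nat.ModEq.pow _ (by decide))
        _ = 3 ^ (2 * a + 1) * (2 ^ (2 * a + 1) * m₂) := by
            rw [show (6 : ℕ) = 2 * 3 from rfl, mul_pow]; ring
        _ ≡ 3 ^ (2 * a + 1) * 3 ^ (2 * a + 1) [MOD 5] := Nat.ModEq.mul_left _ hmod'
        _ = 9 * 81 ^ a := by
            rw [show (81 : ℕ) = 3 ^ 4 from rfl, ← pow_mul]; ring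
        _ ≡ 9 * 1 ^ a [MOD 5] := Nat.ModEq.mul_left _ (Nat.ModEq.pow _ (by decide))
        _ = 9 := by simp
    simpa [Nat.ModEq] using this
  show (4 * m₂) % 10 = 6 % 10
  omega
end

section
/- For all integers m > n ≥ 3 with n odd, T(m) − T(n) ≡ 4·10^(n-1) (mod 10^n); in particular, the slog_3(G)-th rightmost decimal digit of T(m) − G is 4 whenever T(m) is any base-3 power tower strictly taller than Graham's number G. -/
namespace Stmt9Aux

lemma T_succ (n : ℕ) : T (n + 1) = 3 ^ T n := rfl

lemma T_lt_succ (n : ℕ) : T n < T (n + 1) := by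
  rw [T_succ]
  exact Nat.lt_pow_self (by norm_num)

lemma T_strictMono : StrictMono T := strictMono_nat_of_lt_succ T_lt_succ

lemma addmul_modEq (a n w : ℕ) : a + n * w ≡ a [MOD n] := by
  simp [Nat.ModEq, Nat.add_mul_mod_self_left]

lemma T_mod4 : ∀ n : ℕ, T (n + 1) % 4 = 3 := by
  intro n
  induction n with
  | zero => rfl
  | succ n ih =>
    obtain ⟨q, hq⟩ : ∃ q, T (n + 1) = 4 * q + 3 := ⟨T (n + 1) / 4, by omega⟩
    have h : T (n + 2) = 81 ^ q * 27 := by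
      rw [show T (n + 2) = 3 ^ T (n + 1) from rfl, hq, pow_add, pow_mul]
      norm_num
    have h81 : (81 : ℕ) ^ q * 27 ≡ 1 ^ q * 27 [MOD 4] :=
      Nat.ModEq.mul_right 27 (Nat.ModEq.pow q (by decide))
    have := h81
    simp [Nat.ModEq] at this
    rw [h]
    omega

lemma T_mod5 : ∀ n : ℕ, T (n + 2) % 5 = 2 := by
  intro n
  obtain ⟨q, hq⟩ : ∃ q, T (n + 1) = 4 * q + 3 := ⟨T (n + 1) / 4, by have := T_mod4 n; omega⟩
  have h : T (n + 2) = 81 ^ q * 27 := by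
    rw [show T (n + 2) = 3 ^ T (n + 1) from rfl, hq, pow_add, pow_mul]
    norm_num
  have h81 : (81 : ℕ) ^ q * 27 ≡ 1 ^ q * 27 [MOD 5] :=
    Nat.ModEq.mul_right 27 (Nat.ModEq.pow q (by decide))
  have := h81
  simp [Nat.ModEq] at this
  rw [h]
  omega

lemma pow_congr {e m : ℕ} (h1 : 3 ^ e ≡ 1 [MOD m]) :
    ∀ {a b : ℕ}, a ≡ b [MOD e] → 3 ^ a ≡ 3 ^ b [MOD m] := by
  have key : ∀ a b : ℕ, b ≤ a → a ≡ b [MOD e] → 3 ^ a ≡ 3 ^ b [MOD m] := by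
    intro a b hle h
    obtain ⟨t, ht⟩ := (Nat.modEq_iff_dvd' hle).mp h.symm
    have ha : a = b + e * t := by omega
    calc 3 ^ a = 3 ^ b * (3 ^ e) ^ t := by rw [ha, pow_add, pow_mul]
      _ ≡ 3 ^ b * 1 ^ t [MOD m] := Nat.ModEq.mul_left _ (h1.pow t)
      _ = 3 ^ b := by ring
  intro a b h
  rcases le_total b a with hle | hle
  · exact key a b hle h
  · exact (key b a hle h.symm).symm

lemma S10 (r k : ℕ) : ∃ k', (1 + 80 * r + 400 * r * k) ^ 10 = 1 + 800 * r + 4000 * r * k' := by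
  refine ⟨1*k + 72*r + 720*r*k + 1800*r*k^2 + 15360*r^2 + 230400*r^2*k + 1152000*r^2*k^2 + 1920000*r^2*k^3 + 2150400*r^3 + 43008000*r^3*k + 322560000*r^3*k^2 + 1075200000*r^3*k^3 + 1344000000*r^3*k^4 + 206438400*r^4 + 5160960000*r^4*k + 51609600000*r^4*k^2 + 258048000000*r^4*k^3 + 645120000000*r^4*k^4 + 645120000000*r^4*k^5 + 13762560000*r^5 + 412876800000*r^5*k + 5160960000000*r^5*k^2 + 34406400000000*r^5*k^3 + 129024000000000*r^5*k^4 + 258048000000000*r^5*k^5 + 215040000000000*r^5*k^6 + 629145600000*r^6 + 22020096000000*r^6*k + 330301440000000*r^6*k^2 + 2752512000000000*r^6*k^3 + 13762560000000000*r^6*k^4 + 41287680000000000*r^6*k^5 + 68812800000000000*r^6*k^6 + 49152000000000000*r^6*k^7 + 18874368000000*r^7 + 754974720000000*r^7*k + 13212057600000000*r^7*k^2 + 132120576000000000*r^7*k^3 + 825753600000000000*r^7*k^4 + 3303014400000000000*r^7*k^5 + 8257536000000000000*r^7*k^6 + 11796480000000000000*r^7*k^7 + 7372800000000000000*r^7*k^8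 + 335544320000000*r^8 + 15099494400000000*r^8*k + 301989888000000000*r^8*k^2 + 3523215360000000000*r^8*k^3 + 26424115200000000000*r^8*k^4 + 132120576000000000000*r^8*k^5 + 440401920000000000000*r^8*k^6 + 943718400000000000000*r^8*k^7 + 1179648000000000000000*r^8*k^8 + 655360000000000000000*r^8*k^9 + 2684354560000000*r^9 + 134217728000000000*r^9*k + 3019898880000000000*r^9*k^2 + 40265318400000000000*r^9*k^3 + 352321536000000000000*r^9*k^4 + 2113929216000000000000*r^9*k^5 + 8808038400000000000000*r^9*k^6 + 25165824000000000000000*r^9*k^7 + 47185920000000000000000*r^9*k^8 + 52428800000000000000000*r^9*k^9 + 26214400000000000000000*r^9*k^10, ?_⟩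
  ring

lemma S6 (r k : ℕ) : ∃ k', (1 + 80 * r + 400 * r * k) ^ 6 = 1 + 80 * r + 400 * r * k' := by
  refine ⟨1 + 6*k + 240*r + 2400*r*k + 6000*r*k^2 + 25600*r^2 + 384000*r^2*k + 1920000*r^2*k^2 + 3200000*r^2*k^3 + 1536000*r^3 + 30720000*r^3*k + 230400000*r^3*k^2 + 768000000*r^3*k^3 + 960000000*r^3*k^4 + 49152000*r^4 + 1228800000*r^4*k + 12288000000*r^4*k^2 + 61440000000*r^4*k^3 + 153600000000*r^4*k^4 + 153600000000*r^4*k^5 + 655360000*r^5 + 19660800000*r^5*k + 245760000000*r^5*k^2 + 1638400000000*r^5*k^3 + 6144000000000*r^5*k^4 + 12288000000000*r^5*k^5 + 10240000000000*r^5*k^6, ?_⟩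
  ring

lemma S4 (r k : ℕ) : ∃ k', (1 + 80 * r + 400 * r * k) ^ 4 = 1 + 320 * r + 400 * r * k' := by
  refine ⟨4*k + 96*r + 960*r*k + 2400*r*k^2 + 5120*r^2 + 76800*r^2*k + 384000*r^2*k^2 + 640000*r^2*k^3 + 102400*r^3 + 2048000*r^3*k + 15360000*r^3*k^2 + 51200000*r^3*k^3 + 64000000*r^3*k^4, ?_⟩
  ring

lemma L2 : ∀ j : ℕ, ∃ k, 3 ^ (4 * 10 ^ j) = 1 + 80 * 10 ^ j + 400 * 10 ^ j * k := by
  intro j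
  induction j with
  | zero => exact ⟨0, by norm_num⟩
  | succ j ih =>
    obtain ⟨k, hk⟩ := ih
    obtain ⟨k', hk'⟩ := S10 (10 ^ j) k
    refine ⟨k', ?_⟩
    have h : 3 ^ (4 * 10 ^ (j + 1)) = (3 ^ (4 * 10 ^ j)) ^ 10 := by
      rw [← pow_mul]
      ring_nf
    rw [h, hk, hk']
    ring

lemma L1 (j : ℕ) : 3 ^ (4 * 10 ^ j) ≡ 1 [MOD 4 * 10 ^ (j + 1)] := by
  obtain ⟨k, hk⟩ := L2 j
  have h : 3 ^ (4 * 10 ^ j) = 1 + (4 * 10 ^ (j + 1)) * (2 + 10 * k) := by rw [hk]; ring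
  rw [h]
  exact addmul_modEq 1 _ _

lemma E : ∀ n m m' : ℕ, n + 1 ≤ m → n + 1 ≤ m' → T m ≡ T m' [MOD 4 * 10 ^ n] := by
  intro n
  induction n with
  | zero =>
    intro m m' hm hm'
    obtain ⟨a, rfl⟩ : ∃ a, m = a + 1 := ⟨m - 1, by omega⟩
    obtain ⟨b, rfl⟩ : ∃ b, m' = b + 1 := ⟨m' - 1, by omega⟩
    show T (a + 1) ≡ T (b + 1) [MOD 4 * 10 ^ 0]
    have h1 := T_mod4 a
    have h2 := T_mod4 b
    simp only [pow_zero, mul_one]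
    unfold Nat.ModEq
    omega
  | succ n ih =>
    intro m m' hm hm'
    obtain ⟨a, rfl⟩ : ∃ a, m = a + 1 := ⟨m - 1, by omega⟩
    obtain ⟨b, rfl⟩ : ∃ b, m' = b + 1 := ⟨m' - 1, by omega⟩
    rw [T_succ, T_succ]
    exact pow_congr (L1 n) (ih a b (by omega) (by omega))

lemma K : ∀ j : ℕ, T (j + 2) ≡ T (j + 1) + (if j % 2 = 0 then 24 else 16) * 10 ^ j
    [MOD 4 * 10 ^ (j + 1)] := by
  intro j
  induction j with
  | zero => decide
  | succ j ih =>
    obtain ⟨k, hk⟩ := L2 j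
    obtain ⟨q, hq⟩ : ∃ q, T (j + 2) = 5 * q + 2 := ⟨T (j + 2) / 5, by have := T_mod5 j; omega⟩
    have stepA : T (j + 3) ≡ 3 ^ (T (j + 1) + (if j % 2 = 0 then 24 else 16) * 10 ^ j)
        [MOD 4 * 10 ^ (j + 2)] := by
      rw [show T (j + 3) = 3 ^ T (j + 2) from rfl]
      exact pow_congr (L1 (j + 1)) ih
    rcases Nat.even_or_odd j with hj | hj
    · -- j even : coefficient 24, next coefficient 16
      have hj0 : j % 2 = 0 := Nat.even_iff.mp hj
      have hj1 : (j + 1) % 2 = 1 := by omega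
      rw [if_pos hj0] at stepA
      rw [if_neg (by omega : ¬ (j + 1) % 2 = 0)]
      obtain ⟨k6, hk6⟩ := S6 (10 ^ j) k
      have hpow : 3 ^ (T (j + 1) + 24 * 10 ^ j)
          = T (j + 2) * (1 + 80 * 10 ^ j + 400 * 10 ^ j * k6) := by
        rw [pow_add, show (3:ℕ) ^ (24 * 10 ^ j) = (3 ^ (4 * 10 ^ j)) ^ 6 by
          rw [← pow_mul]; ring_nf, hk, hk6]; rfl
      have heq : T (j + 2) * (1 + 80 * 10 ^ j + 400 * 10 ^ j * k6)
          = (T (j + 2) + 16 * 10 ^ (j + 1)) + (4 * 10 ^ (j + 2)) * (q + (5 * q + 2) * k6) := by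
        rw [hq]; ring
      calc T (j + 3) ≡ _ [MOD 4 * 10 ^ (j + 2)] := stepA
        _ = _ := hpow
        _ = _ := heq
        _ ≡ T (j + 2) + 16 * 10 ^ (j + 1) [MOD 4 * 10 ^ (j + 2)] := addmul_modEq _ _ _
    · -- j odd : coefficient 16, next coefficient 24
      have hj1 : j % 2 = 1 := Nat.odd_iff.mp hj
      rw [if_neg (by omega)] at stepA
      rw [if_pos (by omega : (j + 1) % 2 = 0)]
      obtain ⟨k4, hk4⟩ := S4 (10 ^ j) k
      have hpow : 3 ^ (T (j + 1) + 16 * 10 ^ j)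
          = T (j + 2) * (1 + 320 * 10 ^ j + 400 * 10 ^ j * k4) := by
        rw [pow_add, show (3:ℕ) ^ (16 * 10 ^ j) = (3 ^ (4 * 10 ^ j)) ^ 4 by
          rw [← pow_mul]; ring_nf, hk, hk4]; rfl
      have heq : T (j + 2) * (1 + 320 * 10 ^ j + 400 * 10 ^ j * k4)
          = (T (j + 2) + 24 * 10 ^ (j + 1)) + (4 * 10 ^ (j + 2)) * (4 * q + 1 + (5 * q + 2) * k4) := by
        rw [hq]; ring
      calc T (j + 3) ≡ _ [MOD 4 * 10 ^ (j + 2)] := stepA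
        _ = _ := hpow
        _ = _ := heq
        _ ≡ T (j + 2) + 24 * 10 ^ (j + 1) [MOD 4 * 10 ^ (j + 2)] := addmul_modEq _ _ _

end Stmt9Aux

open Stmt9Aux in
theorem stmt9 : ∀ m n : ℕ, 3 ≤ n → n < m → Odd n →
    T m - T n ≡ 4 * 10 ^ (n - 1) [MOD 10 ^ n] := by
  intro m n h3 hnm hodd
  obtain ⟨j, rfl⟩ : ∃ j, n = j + 1 := ⟨n - 1, by omega⟩
  have hj0 : j % 2 = 0 := by
    have := Nat.odd_iff.mp hodd
    omega
  have hdvd : (10 : ℕ) ^ (j + 1) ∣ 4 * 10 ^ (j + 1) := ⟨4, by ring⟩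
  have h1 : T m ≡ T (j + 2) [MOD 10 ^ (j + 1)] :=
    (E (j + 1) m (j + 2) (by omega) (by omega)).of_dvd hdvd
  have h2 : T (j + 2) ≡ T (j + 1) + 24 * 10 ^ j [MOD 10 ^ (j + 1)] := by
    have := (K j).of_dvd hdvd
    rwa [if_pos hj0] at this
  have h3' : T (j + 1) + 24 * 10 ^ j ≡ T (j + 1) + 4 * 10 ^ j [MOD 10 ^ (j + 1)] := by
    have : T (j + 1) + 24 * 10 ^ j = (T (j + 1) + 4 * 10 ^ j) + 10 ^ (j + 1) * 2 := by ring
    rw [this]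
    exact addmul_modEq _ _ _
  have hle : T (j + 1) ≤ T m := le_of_lt (T_strictMono hnm)
  have hmain : T m ≡ T (j + 1) + 4 * 10 ^ j [MOD 10 ^ (j + 1)] := (h1.trans h2).trans h3'
  have hsub : (T m - T (j + 1)) + T (j + 1) ≡ 4 * 10 ^ j + T (j + 1) [MOD 10 ^ (j + 1)] := by
    rw [Nat.sub_add_cancel hle, add_comm (4 * 10 ^ j)]
    exact hmain
  have := Nat.ModEq.add_right_cancel' (T (j + 1)) hsub
  simpa using this
end

section
/- For all integers m > n ≥ 2 with n even, T(m) − T(n) ≡ 6·10^(n-1) (mod 10^n). -/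
def Dl (n : ℕ) : ℕ := T (n + 1) - T n

lemma binom (d : ℤ) : ∀ k : ℕ, ∃ s : ℤ, (1+d)^k = 1 + k*d + d^2*s := by
  intro k
  induction k with
  | zero => exact ⟨0, by ring⟩
  | succ k ih =>
    obtain ⟨s, hs⟩ := ih
    exact ⟨s + k + s*d, by rw [pow_succ, hs]; push_cast; ring⟩

lemma Todd : ∀ n, Odd (T n) := by
  intro n
  cases n with
  | zero => exact ⟨0, rfl⟩
  | succ n => exact Odd.pow (⟨1, by norm_num⟩ : Odd 3)

lemma Tlt (n : ℕ) : T n < T (n+1) := by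
  show T n < 3 ^ T n
  exact Nat.lt_pow_self (by norm_num)

lemma Tmono : StrictMono T := strictMono_nat_of_lt_succ Tlt

lemma Tsucc (n : ℕ) : T (n+1) = T n + Dl n := by
  have := Tlt n
  unfold Dl; omega

lemma powCongr {d N a b : ℕ} (h1 : 3^d ≡ 1 [MOD N]) (h2 : a ≡ b [MOD d]) :
    (3:ℕ)^a ≡ 3^b [MOD N] := by
  wlog hab : a ≤ b generalizing a b
  · exact (this h2.symm (le_of_not_ge hab)).symm
  obtain ⟨q, hq⟩ := (Nat.modEq_iff_dvd' hab).mp h2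
  have hb : b = a + d * q := by omega
  subst hb
  calc (3:ℕ)^a = 3^a * 1^q := by ring
    _ ≡ 3^a * (3^d)^q [MOD N] := ((h1.pow q).symm.mul_left _)
    _ = 3^(a + d*q) := by rw [pow_add, pow_mul]

lemma pow_one_step {x M M' : ℕ} (j : ℕ) (h : x ≡ 1 [MOD M])
    (h1 : M' ∣ j * M) (h2 : M' ∣ M^2) : x^j ≡ 1 [MOD M'] := by
  obtain ⟨t, ht⟩ := (Nat.modEq_iff_dvd.mp h)  -- (M:ℤ) ∣ 1 - x
  push_cast at ht
  obtain ⟨s, hs⟩ := binom ((M:ℤ) * (-t)) j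
  have hx : (x:ℤ) = 1 + (M:ℤ) * (-t) := by rw [mul_neg]; linarith
  apply Nat.modEq_iff_dvd.mpr
  push_cast
  have : (1:ℤ) - x^j = -((j*M)*(-t)) - M^2*((-t)^2*s) := by
    rw [hx, hs]; ring
  rw [this]
  have c1 : ((M':ℕ):ℤ) ∣ ((j*M : ℕ) : ℤ) := Int.natCast_dvd_natCast.mpr h1
  have c2 : ((M':ℕ):ℤ) ∣ ((M^2 : ℕ) : ℤ) := Int.natCast_dvd_natCast.mpr h2
  push_cast at c1 c2
  exact dvd_sub (dvd_neg.mpr (c1.mul_right _)) (c2.mul_right _)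

lemma powq {x M : ℕ} (q : ℕ) (h : x ≡ 1 [MOD M]) : x^q ≡ 1 [MOD M] := by
  calc x^q ≡ 1^q [MOD M] := h.pow q
    _ = 1 := one_pow q

lemma lemK : ∀ n, (3:ℕ)^(4*10^n) ≡ 1 [MOD 4*10^(n+1)] := by
  intro n
  induction n with
  | zero => decide
  | succ n ih =>
    have he : (3:ℕ)^(4*10^(n+1)) = ((3:ℕ)^(4*10^n))^10 := by
      rw [← pow_mul]; ring_nf
    rw [he]
    apply pow_one_step 10 ih
    · exact ⟨1, by ring⟩
    · exact ⟨4*10^n, by ring⟩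

lemma lemQ : ∀ n, (3:ℕ)^(4*5^n) ≡ 1 [MOD 5^(n+1)] := by
  intro n
  induction n with
  | zero => decide
  | succ n ih =>
    have he : (3:ℕ)^(4*5^(n+1)) = ((3:ℕ)^(4*5^n))^5 := by
      rw [← pow_mul]; ring_nf
    rw [he]
    apply pow_one_step 5 ih
    · exact ⟨1, by ring⟩
    · exact ⟨5^n, by ring⟩

lemma lemJ : ∀ n, (3:ℕ)^(2^(n+1)) ≡ 1 [MOD 2^(n+2)] := by
  intro n
  induction n with
  | zero => decide
  | succ n ih =>
    have he : (3:ℕ)^(2^(n+2)) = ((3:ℕ)^(2^(n+1)))^2 := by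
      rw [← pow_mul]; ring_nf
    rw [he]
    apply pow_one_step 2 ih
    · exact ⟨1, by ring⟩
    · exact ⟨2^(n+1), by ring⟩

lemma lemS : ∀ n m, n + 1 ≤ m → T m ≡ T (n+1) [MOD 4*10^n] := by
  intro n
  induction n with
  | zero =>
    intro m hm
    obtain ⟨m', rfl⟩ : ∃ m', m = m' + 1 := ⟨m - 1, by omega⟩
    show (3:ℕ)^(T m') ≡ 3^(T 0) [MOD 4*10^0]
    have h2 : T m' ≡ T 0 [MOD 2] := by
      have h1 := Nat.odd_iff.mp (Todd m')
      show T m' % 2 = T 0 % 2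
      simp [h1, T]
    have : (3:ℕ)^2 ≡ 1 [MOD 4*10^0] := by decide
    exact powCongr this h2
  | succ n ih =>
    intro m hm
    obtain ⟨m', rfl⟩ : ∃ m', m = m' + 1 := ⟨m - 1, by omega⟩
    show (3:ℕ)^(T m') ≡ 3^(T (n+1)) [MOD 4*10^(n+1)]
    exact powCongr (lemK n) (ih m' (by omega))

lemma T4 : ∀ m, T (m+1) ≡ 3 [MOD 4] := by
  intro m
  have := lemS 0 (m+1) (by omega)
  simpa [T] using this

lemma T5 : ∀ m, T (m+2) ≡ 2 [MOD 5] := by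
  intro m
  show (3:ℕ)^(T (m+1)) ≡ 2 [MOD 5]
  calc (3:ℕ)^(T (m+1)) ≡ 3^3 [MOD 5] := powCongr (by decide) (T4 m)
    _ ≡ 2 [MOD 5] := by decide

lemma Dlrec (n : ℕ) : Dl (n+1) = T (n+1) * (3^(Dl n) - 1) := by
  have h1 : T (n+2) = T (n+1) * 3^(Dl n) := by
    show (3:ℕ)^(T (n+1)) = 3^(T n) * 3^(Dl n)
    rw [← pow_add, ← Tsucc]
  show T (n+2) - T (n+1) = _
  rw [h1, Nat.mul_sub, mul_one]

lemma lemH2 : ∀ k, 2^(k+3) ∣ Dl (k+2) := by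
  intro k
  induction k with
  | zero =>
    show 8 ∣ Dl 2
    have : Dl 2 = 3^27 - 27 := by
      show T 3 - T 2 = 3^27 - 27
      norm_num [T]
    rw [this]; norm_num
  | succ k ih =>
    rw [Dlrec]
    obtain ⟨q, hq⟩ := ih
    apply Dvd.dvd.mul_left
    have h1 : (3:ℕ)^(Dl (k+2)) ≡ 1 [MOD 2^(k+4)] := by
      rw [hq, pow_mul]
      exact powq q (lemJ (k+2))
    have h3 : (1:ℕ) ≤ 3^(Dl (k+2)) := Nat.one_le_pow _ _ (by norm_num)
    exact (Nat.modEq_iff_dvd' h3).mp h1.symm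

lemma lemZ : ∀ k, (3:ℕ)^(2*10^(k+1)) ≡ 1 + 2^k * 5^(k+2) [MOD 5^(k+3)] := by
  intro k
  induction k with
  | zero =>
    show (3:ℕ)^20 % 5^3 = (1 + 2^0*5^2) % 5^3
    norm_num
  | succ k ih =>
    have hd := Nat.modEq_iff_dvd.mp ih
    push_cast at hd
    obtain ⟨t, ht⟩ := hd
    have hx : (3:ℤ)^(2*10^(k+1)) = 1 + ((2:ℤ)^k*5^(k+2) - 5^(k+3)*t) := by linarith
    obtain ⟨s, hs⟩ := binom ((2:ℤ)^k*5^(k+2) - 5^(k+3)*t) 10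
    push_cast at hs
    apply Nat.modEq_iff_dvd.mpr
    push_cast
    have hpow : (3:ℤ)^(2*10^(k+1+1)) = ((3:ℤ)^(2*10^(k+1)))^10 := by
      rw [← pow_mul]; congr 1; ring
    rw [hpow, hx, hs]
    exact ⟨2*t - 5^k*((2:ℤ)^k - 5*t)^2*s, by ring⟩

lemma zpow (k h : ℕ) : ((3:ℕ)^(2*10^(k+1)))^h ≡ 1 + h * 2^k * 5^(k+2) [MOD 5^(k+3)] := by
  have hd := Nat.modEq_iff_dvd.mp (lemZ k)
  push_cast at hd
  obtain ⟨t, ht⟩ := hd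
  have hx : (3:ℤ)^(2*10^(k+1)) = 1 + ((2:ℤ)^k*5^(k+2) - 5^(k+3)*t) := by linarith
  obtain ⟨s, hs⟩ := binom ((2:ℤ)^k*5^(k+2) - 5^(k+3)*t) h
  apply Nat.modEq_iff_dvd.mpr
  push_cast
  rw [hx, hs]
  exact ⟨(h:ℤ)*t - 5^(k+1)*((2:ℤ)^k - 5*t)^2*s, by ring⟩

lemma subOne {x c m : ℕ} (h : x ≡ 1 + c [MOD m]) (hx : 1 ≤ x) :
    x - 1 ≡ c [MOD m] := by
  apply Nat.modEq_iff_dvd.mpr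
  have hd := Nat.modEq_iff_dvd.mp h
  rw [Nat.cast_sub hx]
  push_cast at hd ⊢
  obtain ⟨t, ht⟩ := hd
  exact ⟨t, by linarith⟩

lemma step5 (k a b : ℕ) (hsmall : a = 6 ∧ b = 4 ∨ a = 4 ∧ b = 6)
    (ih : Dl (k+2) ≡ a * 10^(k+1) [MOD 5^(k+2)]) :
    Dl (k+3) ≡ b * 10^(k+2) [MOD 5^(k+3)] := by
  obtain ⟨h2, hh2, hab5⟩ : ∃ h2, a = 2*h2 ∧ a ≡ 4*b [MOD 5] := by
    rcases hsmall with ⟨rfl, rfl⟩ | ⟨rfl, rfl⟩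
    · exact ⟨3, rfl, by decide⟩
    · exact ⟨2, rfl, by decide⟩
  have h4 : Dl (k+2) ≡ a * 10^(k+1) [MOD 4] := by
    have d1 : 4 ∣ Dl (k+2) := dvd_trans ⟨2^(k+1), by ring⟩ (lemH2 k)
    have d2 : (4:ℕ) ∣ a * 10^(k+1) := ⟨h2*5*10^k, by rw [hh2]; ring⟩
    exact (Nat.modEq_zero_iff_dvd.mpr d1).trans
      (Nat.modEq_zero_iff_dvd.mpr d2).symm
  have hcop : Nat.Coprime 4 (5^(k+2)) :=
    Nat.Coprime.pow_right _ (by norm_num)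
  have hcrt : Dl (k+2) ≡ a * 10^(k+1) [MOD 4*5^(k+2)] :=
    (Nat.modEq_and_modEq_iff_modEq_mul hcop).mp ⟨h4, ih⟩
  have hpow : (3:ℕ)^(Dl (k+2)) ≡ 3^(a*10^(k+1)) [MOD 5^(k+3)] :=
    powCongr (lemQ (k+2)) hcrt
  have hz : (3:ℕ)^(a*10^(k+1)) ≡ 1 + h2*2^k*5^(k+2) [MOD 5^(k+3)] := by
    have he : (3:ℕ)^(a*10^(k+1)) = ((3:ℕ)^(2*10^(k+1)))^h2 := by
      rw [← pow_mul]; congr 1; rw [hh2]; ring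
    rw [he]; exact zpow k h2
  have hx1 : (1:ℕ) ≤ 3^(Dl (k+2)) := Nat.one_le_pow _ _ (by norm_num)
  have hsub : (3:ℕ)^(Dl (k+2)) - 1 ≡ h2*2^k*5^(k+2) [MOD 5^(k+3)] :=
    subOne (hpow.trans hz) hx1
  have hT : T (k+3) ≡ 2 [MOD 5] := T5 (k+1)
  have hmod53 : (5:ℕ)^(k+3) = 5 * 5^(k+2) := by ring
  have step1 : T (k+3) * (h2*2^k*5^(k+2)) ≡ 2 * (h2*2^k*5^(k+2)) [MOD 5^(k+3)] := by
    have h1 := (hT.mul_right' (c := 5^(k+2))).mul_right (h2*2^k)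
    rw [← hmod53] at h1
    calc T (k+3) * (h2*2^k*5^(k+2)) = T (k+3) * 5^(k+2) * (h2*2^k) := by ring
      _ ≡ 2 * 5^(k+2) * (h2*2^k) [MOD 5^(k+3)] := h1
      _ = 2 * (h2*2^k*5^(k+2)) := by ring
  have step2 : 2 * (h2*2^k*5^(k+2)) ≡ b * 10^(k+2) [MOD 5^(k+3)] := by
    have h1 := (hab5.mul_right (2^k)).mul_right' (c := 5^(k+2))
    rw [← hmod53] at h1
    have h10 : (10:ℕ)^(k+2) = 2^(k+2)*5^(k+2) := by rw [← mul_pow]; norm_num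
    calc 2 * (h2*2^k*5^(k+2)) = a * 2^k * 5^(k+2) := by rw [hh2]; ring
      _ ≡ 4*b * 2^k * 5^(k+2) [MOD 5^(k+3)] := h1
      _ = b * 10^(k+2) := by rw [h10]; ring
  calc Dl (k+3) = T (k+3) * (3^(Dl (k+2)) - 1) := Dlrec (k+2)
    _ ≡ T (k+3) * (h2*2^k*5^(k+2)) [MOD 5^(k+3)] := hsub.mul_left _
    _ ≡ 2 * (h2*2^k*5^(k+2)) [MOD 5^(k+3)] := step1
    _ ≡ b * 10^(k+2) [MOD 5^(k+3)] := step2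

lemma P5 : ∀ k, Dl (k+2) ≡ (if Even k then 6 else 4) * 10^(k+1) [MOD 5^(k+2)] := by
  intro k
  induction k with
  | zero =>
    have hD : Dl 2 = 3^27 - 27 := by
      show T 3 - T 2 = 3^27 - 27
      norm_num [T]
    simp only [if_pos (Even.zero)]
    rw [hD]
    show (3^27 - 27) % 5^2 = (6*10^1) % 5^2
    norm_num
  | succ k ih =>
    rcases Nat.even_or_odd k with hk | hk
    · rw [if_pos hk] at ih
      rw [if_neg (by simp [Nat.even_add_one, hk])]
      exact step5 k 6 4 (Or.inl ⟨rfl, rfl⟩) ih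
    · rw [if_neg (by simpa [Nat.not_even_iff_odd] using hk)] at ih
      rw [if_pos (by simpa [Nat.even_add_one, Nat.not_even_iff_odd] using hk)]
      exact step5 k 4 6 (Or.inr ⟨rfl, rfl⟩) ih

theorem stmt10 : ∀ m n : ℕ, 2 ≤ n → n < m → Even n →
    T m - T n ≡ 6 * 10 ^ (n - 1) [MOD 10 ^ n] := by
  intro m n hn2 hnm hev
  obtain ⟨k, rfl⟩ : ∃ k, n = k + 2 := ⟨n - 2, by omega⟩
  have hevk : Even k := by simpa [Nat.even_add] using hev
  have hS := lemS (k+2) m (by omega)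
  have hle : T (k+3) ≤ T m := Tmono.monotone (by omega)
  have hle2 : T (k+2) ≤ T (k+3) := le_of_lt (Tlt _)
  have hdvd : 10^(k+2) ∣ T m - T (k+3) := by
    have h1 : 4*10^(k+2) ∣ T m - T (k+3) := (Nat.modEq_iff_dvd' hle).mp hS.symm
    exact dvd_trans ⟨4, by ring⟩ h1
  have heq : T m - T (k+2) = (T m - T (k+3)) + Dl (k+2) := by
    have h := Tsucc (k+2)
    rw [show k+2+1 = k+3 by omega] at h
    omega
  have hA : T m - T (k+2) ≡ Dl (k+2) [MOD 10^(k+2)] := by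
    rw [heq]
    calc (T m - T (k+3)) + Dl (k+2)
        ≡ 0 + Dl (k+2) [MOD 10^(k+2)] :=
          Nat.ModEq.add_right _ (Nat.modEq_zero_iff_dvd.mpr hdvd)
      _ = Dl (k+2) := by ring
  have h5 : Dl (k+2) ≡ 6*10^(k+1) [MOD 5^(k+2)] := by
    have := P5 k; rwa [if_pos hevk] at this
  have h2 : Dl (k+2) ≡ 6*10^(k+1) [MOD 2^(k+2)] := by
    have d1 : 2^(k+2) ∣ Dl (k+2) := dvd_trans ⟨2, by ring⟩ (lemH2 k)
    have d2 : (2:ℕ)^(k+2) ∣ 6*10^(k+1) :=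
      ⟨3*5^(k+1), by rw [show (10:ℕ)^(k+1) = 2^(k+1)*5^(k+1) by rw [← mul_pow]; norm_num]; ring⟩
    exact (Nat.modEq_zero_iff_dvd.mpr d1).trans (Nat.modEq_zero_iff_dvd.mpr d2).symm
  have hcop : Nat.Coprime (2^(k+2)) (5^(k+2)) := Nat.Coprime.pow _ _ (by norm_num)
  have hB : Dl (k+2) ≡ 6*10^(k+1) [MOD 10^(k+2)] := by
    have := (Nat.modEq_and_modEq_iff_modEq_mul hcop).mp ⟨h2, h5⟩
    rwa [show (2:ℕ)^(k+2)*5^(k+2) = 10^(k+2) by rw [← mul_pow]; norm_num] at this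
  have hred : k + 2 - 1 = k + 1 := rfl
  rw [hred]
  exact hA.trans hB
end

section
/- For every b ≥ 1, 3^(T(b)) ≡ T(b) (mod 10^(b-1)) where T is base-3 tetration; equivalently, the map x ↦ 3^x stabilizes the residue of T(b) modulo 10^(b-1). -/
/-!
Since `3 ^ 4 = 81 ≡ 1 [MOD 40]` and raising to the tenth power lifts a congruence `a ≡ 1 [MOD n]`
with `10 ∣ n` to `a ^ 10 ≡ 1 [MOD 10 * n]`, we get `3 ^ (4 * 10 ^ c) ≡ 1 [MOD 40 * 10 ^ c]`.
Hence `x ↦ 3 ^ x` maps congruences modulo `4 * 10 ^ c` to congruences modulo `4 * 10 ^ (c + 1)`,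
and induction from `3 ^ 3 ≡ 3 [MOD 4]` gives `T (c + 2) ≡ T (c + 1) [MOD 4 * 10 ^ c]`.
-/

open Finset

theorem mul_dvd_pow_sub_one_of_dvd_sub_one {R : Type*} [CommRing R] {a n : R} {p : ℕ}
    (hp : (p : R) ∣ n) (ha : n ∣ a - 1) : (p : R) * n ∣ a ^ p - 1 := by
  rw [← geom_sum_mul]
  refine mul_dvd_mul ?_ ha
  -- each `a ^ i` is `1` modulo `a - 1`, so the geometric sum is `p` modulo `a - 1`
  have hsum : ∑ i ∈ range p, a ^ i = ∑ i ∈ range p, (a ^ i - 1) + p := by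
    simp [sum_sub_distrib]
  rw [hsum]
  exact dvd_add (dvd_sum fun i _ ↦ hp.trans (ha.trans (sub_one_dvd_pow_sub_one a i))) dvd_rfl

theorem Nat.ModEq.pow_modEq_one_mul {a n p : ℕ} (hp : p ∣ n) (ha : a ≡ 1 [MOD n]) :
    a ^ p ≡ 1 [MOD p * n] := by
  rw [Nat.ModEq.comm, Nat.modEq_iff_dvd] at ha ⊢
  push_cast at ha ⊢
  exact mul_dvd_pow_sub_one_of_dvd_sub_one (Int.natCast_dvd_natCast.mpr hp) ha

theorem Nat.ModEq.pow_of_pow_modEq_one {a e n x y : ℕ} (he : a ^ e ≡ 1 [MOD n])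
    (hxy : x ≡ y [MOD e]) : a ^ x ≡ a ^ y [MOD n] := by
  rw [← ZMod.natCast_eq_natCast_iff] at he ⊢
  push_cast at he ⊢
  rw [pow_eq_pow_mod x he, pow_eq_pow_mod y he, hxy]

theorem three_pow_four_mul_ten_pow_modEq_one (c : ℕ) :
    3 ^ (4 * 10 ^ c) ≡ 1 [MOD 40 * 10 ^ c] := by
  induction c with
  | zero => decide
  | succ c ih =>
    have h := ih.pow_modEq_one_mul (p := 10) (dvd_mul_of_dvd_left (by norm_num) _)
    rw [← pow_mul] at h
    convert h using 1 <;> ring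

theorem three_pow_modEq_three_pow {c x y : ℕ} (h : x ≡ y [MOD 4 * 10 ^ c]) :
    3 ^ x ≡ 3 ^ y [MOD 4 * 10 ^ (c + 1)] := by
  rw [show 4 * 10 ^ (c + 1) = 40 * 10 ^ c by ring]
  exact (three_pow_four_mul_ten_pow_modEq_one c).pow_of_pow_modEq_one h

theorem T_succ_succ_modEq (c : ℕ) : T (c + 2) ≡ T (c + 1) [MOD 4 * 10 ^ c] := by
  induction c with
  | zero => decide
  | succ c ih => exact three_pow_modEq_three_pow ih

theorem stmt12 : ∀ b : ℕ, 1 ≤ b → 3 ^ T b ≡ T b [MOD 10 ^ (b - 1)] := by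
  intro b hb
  obtain ⟨c, rfl⟩ := Nat.exists_eq_add_of_le' hb
  exact (T_succ_succ_modEq c).of_mul_left 4
end

section
/- For consecutive phase shifts of base 3: if d_b := (T(b+1) − T(b))/10^(b-1) mod 10, then d_b + d_(b+1) ≡ 10 ≡ 0 (mod 10) for all b ≥ 2 (since d alternates between 4 and 6). -/
def d (b : ℕ) : ℕ := (T (b + 1) - T b) / 10 ^ (b - 1) % 10

lemma T_succ (b : ℕ) : T (b + 1) = 3 ^ T b := rfl

lemma T_mod4_s16 : ∀ b, 1 ≤ b → T b % 4 = 3 := by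
  intro b hb
  induction b with
  | zero => omega
  | succ b ih =>
    rcases Nat.eq_or_lt_of_le hb with h | h
    · simp [← h]; rfl
    · have hb1 : 1 ≤ b := by omega
      have h4 := ih hb1
      obtain ⟨q, hq⟩ : ∃ q, T b = 2 * q + 1 := ⟨T b / 2, by omega⟩
      rw [T_succ, hq, pow_add, pow_mul]
      have : (3 ^ 2) ^ q % 4 = 1 := by
        rw [Nat.pow_mod]; norm_num
      omega

lemma pow3_mod10 (n : ℕ) (h : n % 4 = 3) : 3 ^ n % 10 = 7 := by
  obtain ⟨q, hq⟩ : ∃ q, n = 4 * q + 3 := ⟨n / 4, by omega⟩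
  rw [hq, pow_add, pow_mul]
  have : (3 ^ 4) ^ q % 10 = 1 := by rw [Nat.pow_mod]; norm_num
  omega

lemma L5base (k : ℕ) : (25:ℤ) ∣ 81 ^ k - (1 + 80 * k) := by
  induction k with
  | zero => norm_num
  | succ k ih =>
    obtain ⟨t, ht⟩ := ih
    exact ⟨81 * t + 256 * k, by push_cast; linear_combination 81 * ht⟩

lemma L5 (j k : ℕ) : (5:ℤ) ^ (j + 2) ∣ 81 ^ (5 ^ j * k) - (1 + 80 * 5 ^ j * k) := by
  induction j with
  | zero => simpa using L5base k
  | succ j ih =>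
    obtain ⟨t, ht⟩ := ih
    have hy : (81:ℤ) ^ (5 ^ j * k) = 1 + 80 * 5 ^ j * k + 5 ^ (j + 2) * t := by
      linarith [ht]
    have hexp : (81:ℤ) ^ (5 ^ (j + 1) * k) = ((81:ℤ) ^ (5 ^ j * k)) ^ 5 := by
      rw [← pow_mul]; congr 1; ring
    set P : ℤ := (5:ℤ) ^ j with hP
    have h52 : (5:ℤ) ^ (j + 2) = 25 * P := by rw [hP]; ring
    have h53 : (5:ℤ) ^ (j + 1 + 2) = 125 * P := by rw [hP]; ring
    refine ⟨t + 2 * P * (16 * k + 5 * t) ^ 2 + 10 * P ^ 2 * (16 * k + 5 * t) ^ 3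
      + 25 * P ^ 3 * (16 * k + 5 * t) ^ 4 + 25 * P ^ 4 * (16 * k + 5 * t) ^ 5, ?_⟩
    rw [hexp, hy, h52, h53]
    have h5j1 : ((5:ℤ)) ^ (j + 1) = 5 * P := by rw [hP]; ring
    rw [h5j1]
    ring

lemma L2base (k : ℕ) : (8:ℤ) ∣ 9 ^ k - 1 := by
  induction k with
  | zero => norm_num
  | succ k ih =>
    obtain ⟨t, ht⟩ := ih
    exact ⟨9 * t + 1, by linear_combination 9 * ht⟩

lemma L2 (c k : ℕ) : (2:ℤ) ^ (c + 3) ∣ 3 ^ (2 ^ (c + 1) * k) - 1 := by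
  induction c with
  | zero =>
    have h9 : (3:ℤ) ^ (2 ^ 1 * k) = 9 ^ k := by
      rw [show 2 ^ 1 * k = k * 2 by ring, pow_mul, ← pow_mul, mul_comm, pow_mul]
      norm_num
    rw [h9]
    simpa using L2base k
  | succ c ih =>
    have hexp : (3:ℤ) ^ (2 ^ (c + 1 + 1) * k) = ((3:ℤ) ^ (2 ^ (c + 1) * k)) ^ 2 := by
      rw [← pow_mul]; congr 1; ring
    set y : ℤ := (3:ℤ) ^ (2 ^ (c + 1) * k) with hy
    have hodd : (2:ℤ) ∣ y - 1 := dvd_trans ⟨2 ^ (c + 2), by ring⟩ ih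
    obtain ⟨s, hs⟩ := hodd
    have hfac : y ^ 2 - 1 = (y - 1) * (y + 1) := by ring
    rw [hexp, hfac]
    have h2 : y + 1 = 2 * (s + 1) := by omega
    obtain ⟨u, hu⟩ := ih
    exact ⟨u * (s + 1), by rw [hu, h2]; ring⟩

lemma step (c m : ℕ) (hm : m % 10 = 4 ∨ m % 10 = 6)
    (h : T (c + 3) - T (c + 2) = 10 ^ (c + 1) * m) :
    ∃ m', T (c + 4) - T (c + 3) = 10 ^ (c + 2) * m' ∧ m' % 10 = 10 - m % 10 := by
  have hTle : T (c + 2) ≤ T (c + 3) := (T_lt_succ _).le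
  set a : ℕ := 10 ^ (c + 1) * m with ha
  have hTa : T (c + 3) = T (c + 2) + a := by omega
  obtain ⟨m₂, hm₂⟩ : ∃ m₂, m = 2 * m₂ := ⟨m / 2, by omega⟩
  set X : ℕ := 3 ^ a - 1 with hX
  have h3a1 : 1 ≤ 3 ^ a := Nat.one_le_pow _ _ (by norm_num)
  have hXZ : (X:ℤ) = 3 ^ a - 1 := by
    rw [hX]; push_cast [Nat.cast_sub h3a1]; ring
  have hfact : T (c + 4) - T (c + 3) = 3 ^ T (c + 2) * X :=
    calc T (c + 4) - T (c + 3) = 3 ^ T (c + 3) - 3 ^ T (c + 2) := rfl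
      _ = 3 ^ (T (c + 2) + a) - 3 ^ T (c + 2) := by rw [← hTa]
      _ = 3 ^ T (c + 2) * 3 ^ a - 3 ^ T (c + 2) * 1 := by rw [pow_add, mul_one]
      _ = 3 ^ T (c + 2) * (3 ^ a - 1) := (Nat.mul_sub _ _ _).symm
      _ = 3 ^ T (c + 2) * X := by rw [← hX]
  -- 5-part
  set k₅ : ℕ := 2 ^ c * m₂ with hk₅
  have ha5 : a = 4 * (5 ^ (c + 1) * k₅) := by
    rw [ha, hm₂, hk₅, show (10:ℕ) = 2 * 5 from rfl, mul_pow]; ring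
  have h81 : (3:ℤ) ^ a = 81 ^ (5 ^ (c + 1) * k₅) := by
    rw [ha5, show ∀ n : ℕ, 4 * n = n * 4 from fun n => by ring, pow_mul,
      ← pow_mul, mul_comm, pow_mul]
    norm_num
  have h5 := L5 (c + 1) k₅
  rw [← h81] at h5
  -- h5 : (5:ℤ)^(c+1+2) ∣ 3^a - (1 + 80 * 5^(c+1) * k₅)
  -- 2-part
  have ha2 : a = 2 ^ (c + 1 + 1) * (5 ^ (c + 1) * m₂) := by
    rw [ha, hm₂, show (10:ℕ) = 2 * 5 from rfl, mul_pow]; ring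
  have h2 := L2 (c + 1) (5 ^ (c + 1) * m₂)
  rw [← ha2] at h2
  -- nat divisibilities
  have h5X : (5:ℕ) ^ (c + 2) ∣ X := by
    have hZ : ((5:ℕ) ^ (c + 2) : ℤ) ∣ (X:ℤ) := by
      push_cast
      have hXsum : (X:ℤ) = ((3:ℤ) ^ a - (1 + 80 * 5 ^ (c + 1) * (k₅:ℤ)))
          + 80 * 5 ^ (c + 1) * (k₅:ℤ) := by rw [hXZ]; ring
      rw [hXsum]
      exact dvd_add (dvd_trans (pow_dvd_pow 5 (by omega)) h5) ⟨16 * (k₅:ℤ), by ring⟩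
    exact_mod_cast hZ
  have h2X : (2:ℕ) ^ (c + 4) ∣ X := by
    have hZ : ((2:ℕ) ^ (c + 4) : ℤ) ∣ (X:ℤ) := by
      push_cast
      rw [hXZ]
      exact dvd_trans (pow_dvd_pow 2 (by omega)) h2
    exact_mod_cast hZ
  have h10X : (10:ℕ) ^ (c + 2) ∣ X := by
    have h2X' : (2:ℕ) ^ (c + 2) ∣ X := dvd_trans (pow_dvd_pow 2 (by omega)) h2X
    have hcop : Nat.Coprime (2 ^ (c + 2)) (5 ^ (c + 2)) :=
      Nat.Coprime.pow _ _ (by norm_num)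
    have hd := Nat.Coprime.mul_dvd_of_dvd_of_dvd hcop h2X' h5X
    have h25 : (2:ℕ) ^ (c + 2) * 5 ^ (c + 2) = 10 ^ (c + 2) := by
      rw [← Nat.mul_pow]
    rwa [h25] at hd
  obtain ⟨w, hw⟩ := h10X
  -- 4 ∣ w
  have h4w : 4 ∣ w := by
    have hstep : 2 ^ (c + 2) * 4 ∣ 2 ^ (c + 2) * (5 ^ (c + 2) * w) := by
      have h24 : 2 ^ (c + 2) * 4 = 2 ^ (c + 4) := by rw [pow_add, pow_add]; ring
      rw [h24, ← mul_assoc, ← Nat.mul_pow]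
      rwa [← hw]
    have h45 : (4:ℕ) ∣ 5 ^ (c + 2) * w :=
      (Nat.mul_dvd_mul_iff_left (pow_pos (by norm_num) (c + 2))).mp hstep
    have hcop : Nat.Coprime 4 (5 ^ (c + 2)) := Nat.Coprime.pow_right _ (by norm_num)
    exact hcop.dvd_of_dvd_mul_left h45
  have hw2 : w % 2 = 0 := by omega
  -- w mod 5
  have hw5 : w % 5 = 4 * m₂ % 5 := by
    have hXw : (X:ℤ) = 5 ^ (c + 2) * (2 ^ (c + 2) * w) := by
      rw [hw]; push_cast
      rw [show (10:ℤ) = 2 * 5 by norm_num, mul_pow]; ring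
    have hkey : (5:ℤ) ^ (c + 1 + 2) ∣ (X:ℤ) - 5 ^ (c + 2) * (16 * (k₅:ℤ)) := by
      have heq : ((X:ℤ) - 5 ^ (c + 2) * (16 * (k₅:ℤ)))
          = ((3:ℤ) ^ a - (1 + 80 * 5 ^ (c + 1) * (k₅:ℤ))) := by
        rw [hXZ]; ring
      rw [heq]; exact h5
    rw [hXw] at hkey
    have hkey2 : (5:ℤ) ∣ (2 ^ (c + 2) * w - 16 * (k₅:ℤ)) := by
      obtain ⟨t, ht⟩ := hkey
      refine ⟨t, ?_⟩
      have h5pos : (0:ℤ) < 5 ^ (c + 2) := by positivity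
      have heq2 : (5:ℤ) ^ (c + 2) * (2 ^ (c + 2) * w - 16 * (k₅:ℤ))
          = 5 ^ (c + 2) * (5 * t) := by
        have h53 : (5:ℤ) ^ (c + 1 + 2) = 5 ^ (c + 2) * 5 := by ring
        rw [h53] at ht
        linarith [ht]
      exact mul_left_cancel₀ (ne_of_gt h5pos) heq2
    have hkZ : (k₅:ℤ) = 2 ^ c * m₂ := by rw [hk₅]; push_cast; ring
    have hkey3 : (5:ℤ) ∣ 2 ^ c * (4 * w - 16 * m₂) := by
      have heq3 : (2:ℤ) ^ c * (4 * (w:ℤ) - 16 * (m₂:ℤ))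
          = 2 ^ (c + 2) * w - 16 * (k₅:ℤ) := by rw [hkZ]; ring
      rw [heq3]; exact hkey2
    have hp5 : Prime (5:ℤ) := by norm_num
    have hnd : ¬ (5:ℤ) ∣ 2 ^ c := by
      intro hdvd
      have := hp5.dvd_of_dvd_pow hdvd
      norm_num at this
    have hkey4 : (5:ℤ) ∣ 4 * (w:ℤ) - 16 * (m₂:ℤ) := by
      rcases hp5.dvd_mul.mp hkey3 with hh | hh
      · exact absurd hh hnd
      · exact hh
    have hkey5 : (5:ℤ) ∣ 4 * ((w:ℤ) - 4 * m₂) := by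
      have heq4 : (4:ℤ) * ((w:ℤ) - 4 * m₂) = 4 * w - 16 * m₂ := by ring
      rw [heq4]; exact hkey4
    have hkey6 : (5:ℤ) ∣ ((w:ℤ) - 4 * m₂) := by
      rcases hp5.dvd_mul.mp hkey5 with hh | hh
      · norm_num at hh
      · exact hh
    have hmod : (w:ℤ) ≡ ((4 * m₂ : ℕ) : ℤ) [ZMOD ((5:ℕ):ℤ)] := by
      rw [Int.modEq_iff_dvd]
      push_cast
      exact dvd_sub_comm.mp hkey6
    exact Int.natCast_modEq_iff.mp hmod
  -- assemble
  refine ⟨3 ^ T (c + 2) * w, ?_, ?_⟩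
  · rw [hfact, hw]; ring
  · have h7 : 3 ^ T (c + 2) % 10 = 7 := pow3_mod10 _ (T_mod4_s16 _ (by omega))
    have h35 : 3 ^ T (c + 2) % 5 = 2 := by omega
    have h32 : 3 ^ T (c + 2) % 2 = 1 := by omega
    have hm'2 : (3 ^ T (c + 2) * w) % 2 = 0 := by
      rw [Nat.mul_mod, h32, hw2]
    rcases hm with hmc | hmc
    · have hm₂5 : m₂ % 5 = 2 := by omega
      have hw5v : w % 5 = 3 := by omega
      have hm'5 : (3 ^ T (c + 2) * w) % 5 = 1 := by
        rw [Nat.mul_mod, h35, hw5v]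
      omega
    · have hm₂5 : m₂ % 5 = 3 := by omega
      have hw5v : w % 5 = 2 := by omega
      have hm'5 : (3 ^ T (c + 2) * w) % 5 = 4 := by
        rw [Nat.mul_mod, h35, hw5v]
      omega

lemma main_lemma : ∀ c : ℕ, ∃ m, T (c + 3) - T (c + 2) = 10 ^ (c + 1) * m
    ∧ (m % 10 = 4 ∨ m % 10 = 6) := by
  intro c
  induction c with
  | zero =>
    refine ⟨762559748496, ?_, Or.inr (by norm_num)⟩
    have hT2 : T 2 = 27 := by norm_num [T]
    have hT3 : T 3 = 7625597484987 := by
      rw [T_succ, hT2]; norm_num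
    rw [hT2, hT3]; norm_num
  | succ c ih =>
    obtain ⟨m, h1, h2⟩ := ih
    obtain ⟨m', h1', h2'⟩ := step c m h2 h1
    exact ⟨m', h1', by omega⟩

theorem stmt16 : ∀ b : ℕ, 2 ≤ b → d b + d (b + 1) ≡ 0 [MOD 10] := by
  intro b hb
  obtain ⟨c, rfl⟩ : ∃ c, b = c + 2 := ⟨b - 2, by omega⟩
  obtain ⟨m, h1, h2⟩ := main_lemma c
  obtain ⟨m', h1', h2'⟩ := step c m h2 h1
  have hpos1 : 0 < 10 ^ (c + 1) := pow_pos (by norm_num) _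
  have hpos2 : 0 < 10 ^ (c + 2) := pow_pos (by norm_num) _
  have hd1 : d (c + 2) = m % 10 := by
    rw [d, show c + 2 - 1 = c + 1 from rfl, show c + 2 + 1 = c + 3 from rfl, h1,
      Nat.mul_div_cancel_left _ hpos1]
  have hd2 : d (c + 3) = m' % 10 := by
    rw [d, show c + 3 - 1 = c + 2 from rfl, show c + 3 + 1 = c + 4 from rfl, h1',
      Nat.mul_div_cancel_left _ hpos2]
  show (d (c + 2) + d (c + 2 + 1)) % 10 = 0 % 10
  rw [show c + 2 + 1 = c + 3 from rfl, hd1, hd2]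
  omega
end
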